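/- Fix i in [n-1] and let w be Mallows distributed on S_n with parameter q > 0. Let w_i* denote the permutation obtained from w by reverse sorting at i: w_i*(j) = w(j) for j not in {i, i+1}, and {w_i*(i), w_i*(i+1)} = {w(i), w(i+1)} with w_i*(i) > w_i*(i+1). Then the distribution of w_i* equals the distribution of w conditioned on the event w(i) > w(i+1). -/

import Mathlib

/-!
Right multiplication by the adjacent transposition `s = (i j)` exchanges ascents and descents
at `i` and raises the inversion number of an ascent by exactly one, so
`P(w s) = q · P(w)` for every ascent `w`. Reverse sorting therefore maps exactly the two
permutations `w₀` and `w₀ s` onto a descent `w₀`, with total mass `(1 + q) / q · P(w₀)`, and the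
same bijection shows `P(w i > w j) = q / (1 + q)`. The latter uses the normalisation
`∑_w q^{l(w)} = [n]_q!`, which follows by induction from placing the value `0` at each
position `p` of a permutation of `n + 1` letters, creating exactly `p` new inversions.
-/

/-- Number of inversions of a permutation of `Fin n`. -/
def invCount (n : ℕ) (w : Equiv.Perm (Fin n)) : ℕ :=
  (Finset.univ.filter (fun p : Fin n × Fin n => p.1 < p.2 ∧ w p.2 < w p.1)).card

/-- The q-factorial `[m]_q! = ∏_{i=1}^m (1 + q + ⋯ + q^{i-1})`. -/
noncomputable def qFactorial (q : ℝ) (m : ℕ) : ℝ :=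
  ∏ i ∈ Finset.Icc 1 m, (∑ j ∈ Finset.range i, q ^ j)

/-- The Mallows probability of `w`: `q^{l(w)} / [n]_q!`. -/
noncomputable def mallows (q : ℝ) (n : ℕ) (w : Equiv.Perm (Fin n)) : ℝ :=
  q ^ invCount n w / qFactorial q n

/-- Number of descents of a permutation of `Fin n`: positions `i` (0-based) with a
successor `j = i+1` such that `w j < w i`. -/
def desCount (n : ℕ) (w : Equiv.Perm (Fin n)) : ℕ :=
  (Finset.univ.filter
    (fun p : Fin n × Fin n => (p.2 : ℕ) = (p.1 : ℕ) + 1 ∧ w p.2 < w p.1)).card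

open Equiv Finset

theorem Equiv.swap_lt_swap_of_covBy {α : Type*} [LinearOrder α] {i j a b : α}
    (hij : i ⋖ j) (hab : a < b) (hne : (a, b) ≠ (i, j)) : swap i j a < swap i j b := by
  have h₁ : ∀ c, i < c → j ≤ c := fun _ => hij.ge_of_gt
  have h₂ : ∀ c, c < j → c ≤ i := fun _ => hij.le_of_lt
  have := hij.lt
  simp only [ne_eq, Prod.mk.injEq] at hne
  rw [swap_apply_def, swap_apply_def]
  split_ifs <;> subst_vars <;> grind

def inversions {n : ℕ} (w : Perm (Fin n)) : Finset (Fin n × Fin n) :=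
  univ.filter fun p => p.1 < p.2 ∧ w p.2 < w p.1

theorem invCount_eq_card_inversions {n : ℕ} (w : Perm (Fin n)) :
    invCount n w = #(inversions w) := rfl

section AdjacentSwap

variable {n : ℕ} {i j : Fin n}

theorem inversions_mul_swap (hij : i ⋖ j) {w : Perm (Fin n)} (h : w i < w j) :
    inversions (w * swap i j) =
      insert (i, j) ((inversions w).map ((swap i j).prodCongr (swap i j)).toEmbedding) := by
  ext ⟨a, b⟩
  simp only [inversions, mem_insert, mem_map_equiv, mem_filter, mem_univ, true_and]
  simp only [prodCongr_symm, symm_swap, prodCongr_apply, Prod.map_apply, Perm.mul_apply]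
  constructor
  · rintro ⟨hab, hw⟩
    by_cases hne : (a, b) = (i, j)
    · exact .inl hne
    · exact .inr ⟨swap_lt_swap_of_covBy hij hab hne, hw⟩
  · rintro (hab | ⟨hab, hw⟩)
    · obtain ⟨rfl, rfl⟩ := Prod.mk.inj hab
      simpa using ⟨hij.lt, h⟩
    · refine ⟨?_, hw⟩
      have hne : (swap i j a, swap i j b) ≠ (i, j) := by
        intro he
        simp only [Prod.mk.injEq, swap_apply_eq_iff, swap_apply_left, swap_apply_right] at he
        rw [he.1, he.2, swap_apply_left, swap_apply_right] at hw
        exact hw.asymm h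
      simpa using swap_lt_swap_of_covBy hij hab hne

theorem invCount_mul_swap (hij : i ⋖ j) {w : Perm (Fin n)} (h : w i < w j) :
    invCount n (w * swap i j) = invCount n w + 1 := by
  have hij_notMem :
      (i, j) ∉ (inversions w).map ((swap i j).prodCongr (swap i j)).toEmbedding := by
    simp [inversions, hij.lt.not_gt]
  rw [invCount_eq_card_inversions, inversions_mul_swap hij h, card_insert_of_notMem hij_notMem,
    card_map, invCount_eq_card_inversions]

end AdjacentSwap

section InsertZero

variable {n : ℕ}

/-- The permutation taking the value `0` at `p` and the values of `e`, shifted up by one, at the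
remaining positions, in order. -/
def insertZero (p : Fin (n + 1)) (e : Perm (Fin n)) : Perm (Fin (n + 1)) :=
  Perm.decomposeFin.symm (0, e) * p.cycleRange

@[simp]
theorem insertZero_apply_self (p : Fin (n + 1)) (e : Perm (Fin n)) : insertZero p e p = 0 := by
  simp [insertZero, Fin.cycleRange_self]

@[simp]
theorem insertZero_apply_succAbove (p : Fin (n + 1)) (e : Perm (Fin n)) (k : Fin n) :
    insertZero p e (p.succAbove k) = (e k).succ := by
  simp [insertZero, Fin.cycleRange_succAbove, Perm.decomposeFin_symm_apply_succ]

theorem insertZero_bijective : Function.Bijective (Function.uncurry (insertZero (n := n))) := by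
  refine (Fintype.bijective_iff_injective_and_card _).2 ⟨?_, by
    simp [Fintype.card_perm, Nat.factorial_succ]⟩
  rintro ⟨p, e⟩ ⟨p', e'⟩ h
  simp only [Function.uncurry_apply_pair] at h
  obtain rfl : p = p' :=
    (insertZero p e).injective (by rw [insertZero_apply_self, h, insertZero_apply_self])
  have he : e = e' := Perm.ext fun k => Fin.succ_injective _ <| by
    rw [← insertZero_apply_succAbove p, h, insertZero_apply_succAbove]
  rw [he]

theorem inversions_insertZero (p : Fin (n + 1)) (e : Perm (Fin n)) :
    inversions (insertZero p e) =
      (Iio p).map (Function.Embedding.sectL _ p) ∪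
        (inversions e).map ((Fin.succAboveEmb p).prodMap (Fin.succAboveEmb p)) := by
  ext ⟨a, b⟩
  simp only [inversions, mem_union, mem_map, mem_filter, mem_univ, true_and, mem_Iio,
    Function.Embedding.sectL_apply, Function.Embedding.coe_prodMap, Fin.coe_succAboveEmb,
    Prod.map_apply, Prod.mk.injEq, Prod.exists]
  constructor
  · rintro ⟨hab, hw⟩
    rcases eq_or_ne b p with rfl | hb
    · exact .inl ⟨a, hab, rfl, rfl⟩
    obtain ⟨k₂, rfl⟩ := Fin.exists_succAbove_eq hb
    rcases eq_or_ne a p with rfl | ha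
    · simp at hw
    obtain ⟨k₁, rfl⟩ := Fin.exists_succAbove_eq ha
    simp only [insertZero_apply_succAbove, Fin.succ_lt_succ_iff, Fin.succAbove_lt_succAbove_iff]
      at hw hab
    exact .inr ⟨k₁, k₂, ⟨hab, hw⟩, rfl, rfl⟩
  · rintro (⟨a, ha, rfl, rfl⟩ | ⟨k₁, k₂, ⟨hk, hw⟩, rfl, rfl⟩)
    · refine ⟨ha, ?_⟩
      rw [insertZero_apply_self, Fin.pos_iff_ne_zero, ← insertZero_apply_self p e]
      exact (insertZero p e).injective.ne ha.ne
    · simpa [Fin.succAbove_lt_succAbove_iff] using ⟨hk, hw⟩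

theorem invCount_insertZero (p : Fin (n + 1)) (e : Perm (Fin n)) :
    invCount (n + 1) (insertZero p e) = p + invCount n e := by
  have hdisj : Disjoint ((Iio p).map (Function.Embedding.sectL _ p))
      ((inversions e).map ((Fin.succAboveEmb p).prodMap (Fin.succAboveEmb p))) := by
    simp [disjoint_left, Fin.succAbove_ne]
  rw [invCount_eq_card_inversions, inversions_insertZero, card_union_of_disjoint hdisj,
    card_map, card_map, Fin.card_Iio, invCount_eq_card_inversions]

end InsertZero

theorem qFactorial_succ (q : ℝ) (n : ℕ) :
    qFactorial q (n + 1) = qFactorial q n * ∑ j ∈ range (n + 1), q ^ j :=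
  prod_Icc_succ_top (Nat.le_add_left 1 n) _

theorem qFactorial_pos {q : ℝ} (hq : 0 < q) (n : ℕ) : 0 < qFactorial q n :=
  prod_pos fun _ hm => sum_pos (fun _ _ => pow_pos hq _)
    (nonempty_range_iff.2 (Nat.one_le_iff_ne_zero.1 (mem_Icc.1 hm).1))

theorem sum_pow_invCount (q : ℝ) (n : ℕ) :
    ∑ w : Perm (Fin n), q ^ invCount n w = qFactorial q n := by
  induction n with
  | zero => simp [invCount, qFactorial]
  | succ n ih =>
    rw [← Fintype.sum_bijective _ insertZero_bijective (fun pe => q ^ (pe.1 + invCount n pe.2)) _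
      (fun pe => by rw [Function.uncurry_def, invCount_insertZero]), Fintype.sum_prod_type,
      qFactorial_succ, ← ih, ← Fin.sum_univ_eq_sum_range (q ^ ·), mul_comm, sum_mul_sum]
    simp only [pow_add]

section Mallows

variable {n : ℕ} {i j : Fin n}

theorem sum_pow_invCount_descent_mul (hij : i ⋖ j) (q : ℝ) :
    (∑ w ∈ univ.filter (fun w : Perm (Fin n) => w j < w i), q ^ invCount n w) * (1 + q) =
      q * qFactorial q n := by
  have not_descent_iff (w : Perm (Fin n)) : ¬ w j < w i ↔ w i < w j :=
    not_lt.trans (w.injective.ne hij.lt.ne).le_iff_lt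
  have hswap : q * ∑ w ∈ univ.filter (fun w : Perm (Fin n) => ¬ w j < w i), q ^ invCount n w =
      ∑ w ∈ univ.filter (fun w : Perm (Fin n) => w j < w i), q ^ invCount n w := by
    rw [mul_sum]
    refine sum_equiv (Equiv.mulRight (swap i j)) (by simp [not_descent_iff]) fun w hw => ?_
    rw [coe_mulRight, invCount_mul_swap hij ((not_descent_iff w).1 (mem_filter.1 hw).2),
      pow_succ']
  have hsplit := sum_filter_add_sum_filter_not univ (fun w : Perm (Fin n) => w j < w i)
    (q ^ invCount n ·)
  rw [sum_pow_invCount] at hsplit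
  linear_combination q * hsplit - hswap

theorem sum_mallows (q : ℝ) (s : Finset (Perm (Fin n))) :
    ∑ w ∈ s, mallows q n w = (∑ w ∈ s, q ^ invCount n w) / qFactorial q n :=
  (sum_div _ _ _).symm

theorem sum_mallows_descent (hij : i ⋖ j) {q : ℝ} (hq : 0 < q) :
    ∑ w ∈ univ.filter (fun w : Perm (Fin n) => w j < w i), mallows q n w = q / (1 + q) := by
  rw [sum_mallows, div_eq_div_iff (qFactorial_pos hq n).ne' (by positivity),
    sum_pow_invCount_descent_mul hij q]

theorem mallows_mul_swap (hij : i ⋖ j) (q : ℝ) {w : Perm (Fin n)} (h : w i < w j) :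
    mallows q n (w * swap i j) = q * mallows q n w := by
  rw [mallows, mallows, invCount_mul_swap hij h, pow_succ', mul_div_assoc]

def reverseSortAt (i j : Fin n) (w : Perm (Fin n)) : Perm (Fin n) :=
  if w i < w j then w * swap i j else w

theorem reverseSortAt_apply_lt (hij : i ≠ j) (w : Perm (Fin n)) :
    reverseSortAt i j w j < reverseSortAt i j w i := by
  unfold reverseSortAt
  split_ifs with h
  · simpa using h
  · exact (w.injective.ne hij.symm).lt_of_le (not_lt.1 h)

theorem filter_reverseSortAt_eq_pair {v : Perm (Fin n)} (hv : v i < v j) :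
    univ.filter (fun w => reverseSortAt i j w = v * swap i j) = {v * swap i j, v} := by
  ext w
  simp only [mem_filter, mem_univ, true_and, mem_insert, mem_singleton]
  unfold reverseSortAt
  split_ifs with h
  · refine ⟨fun hw => .inr (mul_right_cancel hw), ?_⟩
    rintro (rfl | rfl)
    · simp only [Perm.mul_apply, swap_apply_left, swap_apply_right] at h
      exact absurd hv h.asymm
    · rfl
  · exact (or_iff_left (by rintro rfl; exact h hv)).symm

theorem filter_reverseSortAt_eq_empty (hij : i ≠ j) {w₀ : Perm (Fin n)} (h : ¬ w₀ j < w₀ i) :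
    univ.filter (fun w => reverseSortAt i j w = w₀) = ∅ :=
  filter_eq_empty_iff.2 fun w _ hw => h (hw ▸ reverseSortAt_apply_lt hij w)

end Mallows

open scoped Classical in
/-- Let `w` be Mallows distributed with parameter `q > 0`, `i` a position with
successor `j = i+1`, and let `wᵢ*` be obtained from `w` by reverse sorting at `i` (the values
at positions `i, i+1` are placed in decreasing order). Then the law of `wᵢ*` equals the
conditional law of `w` given a descent at `i`:
`P(wᵢ* = w₀) · P(w i > w j) = P(w = w₀) · 1_{w₀ i > w₀ j}`. -/
theorem stmt_14 (n : ℕ) (q : ℝ) (hq : 0 < q)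
    (i j : Fin n) (hij : (j : ℕ) = (i : ℕ) + 1)
    (w₀ : Equiv.Perm (Fin n)) :
    (∑ w ∈ Finset.univ.filter
        (fun w : Equiv.Perm (Fin n) =>
          (if w i < w j then w * Equiv.swap i j else w) = w₀), mallows q n w)
      * (∑ w ∈ Finset.univ.filter (fun w : Equiv.Perm (Fin n) => w j < w i), mallows q n w)
    = (if w₀ j < w₀ i then mallows q n w₀ else 0) := by
  change (∑ w ∈ univ.filter (fun w => reverseSortAt i j w = w₀), mallows q n w) * _ = _
  have hcov : i ⋖ j := Fin.covBy_iff.2 (Nat.covBy_iff_add_one_eq.2 hij.symm)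
  split_ifs with hd
  · obtain ⟨v, hv, rfl⟩ : ∃ v, v i < v j ∧ v * swap i j = w₀ :=
      ⟨w₀ * swap i j, by simpa using hd, mul_swap_mul_self _ _ _⟩
    have hne : v * swap i j ≠ v := fun h => hcov.ne (swap_eq_one_iff.1 (mul_eq_left.1 h))
    rw [filter_reverseSortAt_eq_pair hv, sum_pair hne, sum_mallows_descent hcov hq,
      mallows_mul_swap hcov q hv]
    field_simp
    ring
  · rw [filter_reverseSortAt_eq_empty hcov.ne hd, sum_empty, zero_mul]
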